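/- arXiv:1904.07729 — 2 statements merged into one kernel-verified Lean document; each statement's English description precedes it below -/
import Mathlib

section
/- The starting Latin cube of order n=2t is a Latin cube: every symbol in {1,...,2t} appears exactly once in each row, each column, and each file. -/
/-!
Encode `{1, ..., 2t}` in the dihedral group `D_t` by `x ↦ r x` for `x ≤ t` and `x ↦ sr (-x)`
for `x > t`. Under this encoding the cube becomes `L(i, j, k) = x_k * x_i⁻¹ * x_j`, so along a
row, a column or a file the symbol is obtained from the varying coordinate by group
translations and inversion, which are bijections of `D_t`.
-/

/-- The representative of `x` modulo `t` in `{1, ..., t}`. -/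
def rmod (t : ℕ) (x : ℤ) : ℤ := (x - 1) % t + 1

/-- The starting Latin cube of order `2*t`. -/
def SLC (t : ℕ) (i j k : ℤ) : ℤ :=
  if (i ≤ t ∧ j ≤ t ∧ k ≤ t) ∨ ((t:ℤ) < i ∧ (t:ℤ) < k ∧ j ≤ t) then rmod t (j - i + k)
  else if ((t:ℤ) < i ∧ (t:ℤ) < j ∧ k ≤ t) ∨ ((t:ℤ) < j ∧ (t:ℤ) < k ∧ i ≤ t) then rmod t (i - j + k)
  else if (i ≤ t ∧ k ≤ t ∧ (t:ℤ) < j) ∨ ((t:ℤ) < i ∧ (t:ℤ) < j ∧ (t:ℤ) < k) then rmod t (j - i + k) + t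
  else rmod t (i - j + k) + t

open DihedralGroup

section rmod

variable {t : ℕ}

lemma rmod_modEq (x : ℤ) : rmod t x ≡ x [ZMOD t] := by
  simpa [rmod] using (Int.mod_modEq (x - 1) t).add_right 1

lemma rmod_congr {x y : ℤ} (h : x ≡ y [ZMOD t]) : rmod t x = rmod t y := by
  simp only [rmod, h.sub_right 1 |>.eq]

lemma rmod_eq_self {x : ℤ} (h₁ : 1 ≤ x) (h₂ : x ≤ t) : rmod t x = x := by
  rw [rmod, Int.emod_eq_of_lt (by omega) (by omega), sub_add_cancel]

lemma one_le_rmod (ht : 0 < t) (x : ℤ) : 1 ≤ rmod t x := by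
  have := Int.emod_nonneg (x - 1) (by omega : (t : ℤ) ≠ 0)
  rw [rmod]
  omega

lemma rmod_le (ht : 0 < t) (x : ℤ) : rmod t x ≤ t := by
  have := Int.emod_lt_of_pos (x - 1) (by omega : (0 : ℤ) < t)
  rw [rmod]
  omega

@[simp]
lemma intCast_rmod (x : ℤ) : ((rmod t x : ℤ) : ZMod t) = x :=
  (ZMod.intCast_eq_intCast_iff _ _ _).mpr (rmod_modEq x)

end rmod

def toDihedral (t : ℕ) (x : ℤ) : DihedralGroup t := if x ≤ t then r x else sr (-x)

def ofDihedral (t : ℕ) : DihedralGroup t → ℤ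
  | r a => rmod t a.val
  | sr a => rmod t (-a.val) + t

section dihedral

variable {t : ℕ} [NeZero t]

lemma ofDihedral_r (y : ℤ) : ofDihedral t (r y) = rmod t y :=
  rmod_congr <| (ZMod.intCast_eq_intCast_iff _ _ _).mp (by simp)

lemma ofDihedral_sr (y : ℤ) : ofDihedral t (sr y) = rmod t (-y) + t :=
  congrArg (· + (t : ℤ)) <| rmod_congr <| (ZMod.intCast_eq_intCast_iff _ _ _).mp (by simp)

lemma SLC_eq_ofDihedral (i j k : ℤ) :
    SLC t i j k = ofDihedral t (toDihedral t k * (toDihedral t i)⁻¹ * toDihedral t j) := by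
  unfold SLC toDihedral
  split_ifs <;> (try omega) <;>
    simp only [inv_r, inv_sr, r_mul_r, r_mul_sr, sr_mul_r, sr_mul_sr, ← Int.cast_neg,
      ← Int.cast_add, ← Int.cast_sub, ofDihedral_r, ofDihedral_sr] <;>
    ring_nf

lemma ofDihedral_toDihedral {x : ℤ} (hx : x ∈ Finset.Icc 1 (2 * t : ℤ)) :
    ofDihedral t (toDihedral t x) = x := by
  rw [Finset.mem_Icc] at hx
  unfold toDihedral
  split_ifs with h
  · rw [ofDihedral_r, rmod_eq_self hx.1 h]
  · have hx_sub : x ≡ x - t [ZMOD t] := Int.modEq_iff_dvd.mpr ⟨-1, by ring⟩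
    rw [← Int.cast_neg, ofDihedral_sr, neg_neg, rmod_congr hx_sub,
      rmod_eq_self (by omega) (by omega), sub_add_cancel]

lemma toDihedral_ofDihedral (g : DihedralGroup t) : toDihedral t (ofDihedral t g) = g := by
  have ht := Nat.pos_of_neZero t
  cases g with
  | r a => simp [ofDihedral, toDihedral, rmod_le ht]
  | sr a =>
    have := one_le_rmod ht (-a.val)
    rw [ofDihedral, toDihedral, if_neg (by omega)]
    simp

lemma ofDihedral_mem_Icc (g : DihedralGroup t) : ofDihedral t g ∈ Finset.Icc 1 (2 * t : ℤ) := by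
  have ht := Nat.pos_of_neZero t
  rw [Finset.mem_Icc]
  cases g with
  | r a => rw [ofDihedral]; constructor <;> linarith [one_le_rmod ht a.val, rmod_le ht a.val]
  | sr a => rw [ofDihedral]; constructor <;> linarith [one_le_rmod ht (-a.val), rmod_le ht (-a.val)]

end dihedral

lemma existsUnique_mem_conj_equiv {α G : Type*} {S : Finset α} {E : α → G} {D : G → α}
    (hDE : ∀ x ∈ S, D (E x) = x) (hED : ∀ g, E (D g) = g) (hD : ∀ g, D g ∈ S) (φ : G ≃ G)
    {s : α} (hs : s ∈ S) : ∃! x, x ∈ S ∧ D (φ (E x)) = s := by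
  refine ⟨D (φ.symm (E s)), ⟨hD _, by rw [hED, φ.apply_symm_apply, hDE s hs]⟩, ?_⟩
  rintro x ⟨hx, rfl⟩
  rw [hED, φ.symm_apply_apply, hDE x hx]

/-- The starting Latin cube of order `n = 2t` is a Latin cube: every symbol in
`{1,...,2t}` appears exactly once in each row, each column, and each file. -/
theorem starting_latin_cube_is_latin (t : ℕ) (ht : 1 ≤ t) :
    (∀ i ∈ Finset.Icc (1:ℤ) (2*t), ∀ k ∈ Finset.Icc (1:ℤ) (2*t),
      ∀ s ∈ Finset.Icc (1:ℤ) (2*t),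
      ∃! j, j ∈ Finset.Icc (1:ℤ) (2*t) ∧ SLC t i j k = s) ∧
    (∀ j ∈ Finset.Icc (1:ℤ) (2*t), ∀ k ∈ Finset.Icc (1:ℤ) (2*t),
      ∀ s ∈ Finset.Icc (1:ℤ) (2*t),
      ∃! i, i ∈ Finset.Icc (1:ℤ) (2*t) ∧ SLC t i j k = s) ∧
    (∀ i ∈ Finset.Icc (1:ℤ) (2*t), ∀ j ∈ Finset.Icc (1:ℤ) (2*t),
      ∀ s ∈ Finset.Icc (1:ℤ) (2*t),
      ∃! k, k ∈ Finset.Icc (1:ℤ) (2*t) ∧ SLC t i j k = s) := by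
  have : NeZero t := ⟨by omega⟩
  have line := existsUnique_mem_conj_equiv (fun _ => ofDihedral_toDihedral (t := t))
    toDihedral_ofDihedral ofDihedral_mem_Icc
  simp only [SLC_eq_ofDihedral]
  refine ⟨fun i _ k _ s hs => ?_, fun j _ k _ s hs => ?_, fun i _ j _ s hs => ?_⟩
  · simpa [mul_assoc] using line (Equiv.mulLeft (toDihedral t k * (toDihedral t i)⁻¹)) hs
  · simpa using line (((Equiv.inv _).trans (Equiv.mulLeft (toDihedral t k))).trans
      (Equiv.mulRight (toDihedral t j))) hs
  · simpa [mul_assoc] using line (Equiv.mulRight ((toDihedral t i)⁻¹ * toDihedral t j)) hs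
end

section
/- If a subcube of order 2 in the starting Latin cube contains the cells (i1,j1,k1), (i1,j2,k1), (i2,j1,k1), (i2,j2,k1), (i1,j1,k2), (i1,j2,k2), (i2,j1,k2), (i2,j2,k2), then the rows R_{i1,k1} and R_{i2,k2} lie in the same row block, as do the rows R_{i2,k1} and R_{i1,k2}. -/
/-- The eight cells spanned by `(i1,j1,k1)` and `(i2,j2,k2)` form a subcube of order 2
of the starting Latin cube of order `2*t`. -/
abbrev SubC (t : ℕ) (i1 j1 k1 i2 j2 k2 : ℤ) : Prop :=
  i1 ≠ i2 ∧ j1 ≠ j2 ∧ k1 ≠ k2 ∧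
  SLC t i1 j1 k1 = SLC t i2 j2 k1 ∧ SLC t i1 j1 k1 = SLC t i1 j2 k2 ∧
  SLC t i1 j1 k1 = SLC t i2 j1 k2 ∧
  SLC t i1 j2 k1 = SLC t i2 j1 k1 ∧ SLC t i1 j2 k1 = SLC t i1 j1 k2 ∧
  SLC t i1 j2 k1 = SLC t i2 j2 k2

/-!
Every entry of the starting cube has the form `(0 or t) + rmod t (s * (x - i) + k)`, where the
sign `s = ±1` only depends on whether `i` and `k` lie in the same half of `{1, ..., 2t}`, and
the summand `0`/`t` records whether the column `x` lies in the half that sign predicts. Hence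
one common entry of the rows `R_{i,k}` and `R_{i',k'}` in some column forces equal signs and
`k - s i ≡ k' - s i' (mod t)`, after which the two rows agree in every column. In a subcube the
rows `R_{i₁,k₁}`, `R_{i₂,k₂}` share their entry in column `j₁`, and so do `R_{i₂,k₁}`, `R_{i₁,k₂}`.
-/

lemma rmod_mem_Icc {t : ℕ} (ht : 1 ≤ t) (a : ℤ) : rmod t a ∈ Finset.Icc (1 : ℤ) t := by
  have ht' : (0 : ℤ) < t := by exact_mod_cast ht
  have := Int.emod_nonneg (a - 1) ht'.ne'
  have := Int.emod_lt_of_pos (a - 1) ht'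
  simp only [rmod, Finset.mem_Icc]
  constructor <;> linarith

lemma rmod_eq_rmod_iff (t : ℕ) (a b : ℤ) : rmod t a = rmod t b ↔ (t : ℤ) ∣ a - b := by
  rw [rmod, rmod, add_left_inj, Int.emod_eq_emod_iff_emod_sub_eq_zero,
    sub_sub_sub_cancel_right, Int.dvd_iff_emod_eq_zero]

lemma ite_add_rmod_inj {t : ℕ} (ht : 1 ≤ t) {p q : Prop} [Decidable p] [Decidable q] (a b : ℤ) :
    (if p then 0 else (t : ℤ)) + rmod t a = (if q then 0 else (t : ℤ)) + rmod t b ↔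
      (p ↔ q) ∧ (t : ℤ) ∣ a - b := by
  have ha := Finset.mem_Icc.mp (rmod_mem_Icc ht a)
  have hb := Finset.mem_Icc.mp (rmod_mem_Icc ht b)
  rw [← rmod_eq_rmod_iff]
  by_cases hp : p <;> by_cases hq : q <;> simp [hp, hq] <;> omega

def slcSign (t : ℕ) (i k : ℤ) : ℤ := if (i ≤ t ↔ k ≤ t) then 1 else -1

lemma SLC_eq_ite_add_rmod (t : ℕ) (i x k : ℤ) :
    SLC t i x k = (if (x ≤ t ↔ (i ≤ t ↔ k ≤ t)) then 0 else (t : ℤ)) +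
      rmod t (slcSign t i k * (x - i) + k) := by
  simp only [SLC, slcSign, ← not_le]
  by_cases hi : i ≤ t <;> by_cases hx : x ≤ t <;> by_cases hk : k ≤ t <;>
    simp [hi, hx, hk, add_comm (t : ℤ)]

theorem SLC_row_eq_of_eq_at {t : ℕ} (ht : 1 ≤ t) {i k i' k' x : ℤ}
    (h : SLC t i x k = SLC t i' x k') (y : ℤ) : SLC t i y k = SLC t i' y k' := by
  rw [SLC_eq_ite_add_rmod, SLC_eq_ite_add_rmod, ite_add_rmod_inj ht] at h ⊢
  obtain ⟨hside, hdvd⟩ := h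
  have hσ : (i ≤ t ↔ k ≤ t) ↔ (i' ≤ t ↔ k' ≤ t) := by tauto
  have hsign : slcSign t i k = slcSign t i' k' := by simp only [slcSign, hσ]
  refine ⟨iff_congr Iff.rfl hσ, ?_⟩
  rw [hsign] at hdvd ⊢
  convert hdvd using 1
  ring

theorem subcube_rows_same_row_block_general (t : ℕ) (ht : 1 ≤ t)
    (i₁ j₁ k₁ i₂ j₂ k₂ : ℤ)
    (hsub : SubC t i₁ j₁ k₁ i₂ j₂ k₂) :
    (∀ x ∈ Finset.Icc (1:ℤ) (2*t), SLC t i₁ x k₁ = SLC t i₂ x k₂) ∧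
    (∀ x ∈ Finset.Icc (1:ℤ) (2*t), SLC t i₂ x k₁ = SLC t i₁ x k₂) := by
  obtain ⟨-, -, -, -, -, h₁₁, h₂₁, h₁₂, -⟩ := hsub
  exact ⟨fun x _ => SLC_row_eq_of_eq_at ht h₁₁ x,
    fun x _ => SLC_row_eq_of_eq_at ht (h₂₁.symm.trans h₁₂) x⟩

/-- If a subcube of order 2 in the starting Latin cube of order `2t` is spanned by
`(i₁,j₁,k₁)` and `(i₂,j₂,k₂)`, then the rows `R_{i₁,k₁}` and `R_{i₂,k₂}` lie in the
same row block, as do the rows `R_{i₂,k₁}` and `R_{i₁,k₂}`. -/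
theorem subcube_rows_same_row_block (t : ℕ) (ht : 1 ≤ t)
    (i₁ j₁ k₁ i₂ j₂ k₂ : ℤ)
    (hi₁ : i₁ ∈ Finset.Icc (1:ℤ) (2*t)) (hj₁ : j₁ ∈ Finset.Icc (1:ℤ) (2*t))
    (hk₁ : k₁ ∈ Finset.Icc (1:ℤ) (2*t)) (hi₂ : i₂ ∈ Finset.Icc (1:ℤ) (2*t))
    (hj₂ : j₂ ∈ Finset.Icc (1:ℤ) (2*t)) (hk₂ : k₂ ∈ Finset.Icc (1:ℤ) (2*t))
    (hsub : SubC t i₁ j₁ k₁ i₂ j₂ k₂) :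
    (∀ x ∈ Finset.Icc (1:ℤ) (2*t), SLC t i₁ x k₁ = SLC t i₂ x k₂) ∧
    (∀ x ∈ Finset.Icc (1:ℤ) (2*t), SLC t i₂ x k₁ = SLC t i₁ x k₂) :=
  subcube_rows_same_row_block_general t ht i₁ j₁ k₁ i₂ j₂ k₂ hsub
end
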